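/- arXiv:2510.27278 — 2 statements merged into one kernel-verified Lean document; each statement's English description precedes it below -/
import Mathlib

section
/- Assume (HP), (Hv) and (H1). Let k≥1 be an integer and λ∈ℂ with Re λ = v(θ1) or Re λ = v(θ2). Suppose ψ∈C¹([0,2];ℂ) satisfies ψ(0)=ψ(2)=0, ψ' is Lipschitz on [0,2], and for every y∈(0,2) with v(y)≠λ the second derivative ψ''(y) exists and ψ''(y) − k²·ψ(y) − (v''(y)/(v(y)−λ))·ψ(y) + (𝒫(y)/(v(y)−λ)²)·ψ(y) = 0. Then ψ is identically zero. (In particular, no λ whose real part equals v(θ1) or v(θ2) is an eigenvalue of the mode-k linearized Boussinesq operator.) -/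
open MeasureTheory Filter

noncomputable section

namespace Boussinesq

/-- Green's kernel of `∂_y² − m²` on `[0,2]` with Dirichlet boundary conditions. -/
def Gker (m : ℕ) (y z : ℝ) : ℝ :=
  -(Real.sinh (m * min y z) * Real.sinh (m * (2 - max y z))) / (m * Real.sinh (2 * m))

/-- Sup of `|f|` over `[0,2]` (the `L^∞(0,2)` norm for continuous `f`). -/
def supAbs (f : ℝ → ℝ) : ℝ := sSup ((fun y => |f y|) '' Set.Icc (0 : ℝ) 2)

/-- `L²(0,2)` norm. -/
def L2norm (f : ℝ → ℂ) : ℝ := (∫ y in (0:ℝ)..2, ‖f y‖ ^ 2) ^ (1/2 : ℝ)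

/-- Weighted Sobolev norm `‖f‖_{H_k^j}`. -/
def HkNorm (k j : ℕ) (f : ℝ → ℂ) : ℝ :=
  ∑ n ∈ Finset.range (j + 1), (k : ℝ) ^ (-(n : ℝ)) * L2norm (iteratedDeriv n f)

/-- Lebesgue measure restricted to `(0,2)`. -/
def mu0 : Measure ℝ := volume.restrict (Set.Ioo 0 2)

/-- Background data: gravity constant, shear and stratification profiles, the bounds on the
shear, and the endpoints of the stratified region. -/
structure Flow where
  g : ℝ
  v : ℝ → ℝ
  P : ℝ → ℝ
  c0 : ℝ
  C0 : ℝ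
  θ1 : ℝ
  θ2 : ℝ

namespace Flow

variable (F : Flow)

/-- `𝒫 = g·P`. -/
def calP : ℝ → ℝ := fun y => F.g * F.P y

/-- The local Richardson number `𝒥(y) = 𝒫(y)/v'(y)²`. -/
def J : ℝ → ℝ := fun y => F.calP y / (deriv F.v y) ^ 2

/-- `μ(y) = √(max(0, 1/4 − 𝒥(y)))`. -/
def mu : ℝ → ℝ := fun y => Real.sqrt (max 0 (1/4 - F.J y))

/-- Hypothesis (HP). -/
def HP : Prop :=
  0 < F.g ∧ ContDiff ℝ 2 F.P ∧ 0 < F.θ1 ∧ F.θ1 < F.θ2 ∧ F.θ2 < 2 ∧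
  (∀ y ∈ Set.Icc (0:ℝ) F.θ1 ∪ Set.Icc F.θ2 2, F.P y = 0) ∧
  (∀ y ∈ Set.Ioo F.θ1 F.θ2, 0 < F.P y)

/-- Hypothesis (Hv). -/
def Hv : Prop :=
  ContDiff ℝ 4 F.v ∧ 0 < F.c0 ∧ F.c0 ≤ F.C0 ∧
  (∀ y ∈ Set.Icc (0:ℝ) 2, F.c0 ≤ deriv F.v y ∧ deriv F.v y ≤ F.C0) ∧
  tsupport (iteratedDeriv 2 F.v) ⊆ Set.Ioo F.θ1 F.θ2

/-- Hypothesis (H1). -/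
def H1 : Prop :=
  F.c0⁻¹ * supAbs (iteratedDeriv 3 F.v)
    + (1/2) * F.c0⁻¹ ^ 2 * supAbs (iteratedDeriv 2 F.calP) < 1

/-- Hypothesis (H2). -/
def H2 : Prop :=
  ∃ yt ∈ Set.Icc (0:ℝ) 2,
    (∀ y ∈ Set.Icc (0:ℝ) 2, F.J y ≤ F.J yt) ∧
    (∀ y' ∈ Set.Icc (0:ℝ) 2, (∀ y ∈ Set.Icc (0:ℝ) 2, F.J y ≤ F.J y') → y' = yt) ∧
    (∀ y ∈ Set.Icc (0:ℝ) yt, iteratedDeriv 2 F.v y ≤ 0 ∧ 0 ≤ deriv F.J y) ∧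
    (∀ y ∈ Set.Icc yt (2:ℝ), 0 ≤ iteratedDeriv 2 F.v y ∧ deriv F.J y ≤ 0) ∧
    (∃ a b : ℝ, a ∈ Set.Icc (0:ℝ) 2 ∧ b ∈ Set.Icc (0:ℝ) 2 ∧ a ≠ b ∧
      F.J a = 1/4 ∧ F.J b = 1/4 ∧
      (∀ y ∈ Set.Icc (0:ℝ) 2, F.J y = 1/4 → y = a ∨ y = b))

/-- Hypothesis (H3): the linearized Euler operator has no eigenvalues nor
embedded eigenvalues. -/
def H3 : Prop :=
  ∀ m : ℕ, 1 ≤ m → ∀ lam : ℂ, ∀ f : ℝ → ℂ,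
    MemLp f 2 mu0 →
    (∀ᵐ y ∂mu0, y ∉ Set.Icc F.θ1 F.θ2 → f y = 0) →
    (∀ᵐ y ∂mu0, ((F.v y : ℂ) - lam) * f y
        = ((iteratedDeriv 2 F.v y : ℝ) : ℂ) * ∫ z in (0:ℝ)..2, (Gker m y z : ℂ) * f z) →
    (∀ᵐ y ∂mu0, f y = 0)

end Flow

/-- The partition of `[0,2]` into the non-stratified, weakly, mildly and strongly
stratified regimes. -/
structure Partition (F : Flow) where
  δ : ℝ
  ϖ11 : ℝ
  ϖ1 : ℝ
  ϖ12 : ℝ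
  ϖ21 : ℝ
  ϖ2 : ℝ
  ϖ22 : ℝ
  hδ0 : 0 < δ
  hδ : δ < 1/8
  h1 : F.θ1 < ϖ11
  h2 : ϖ11 < ϖ1
  h3 : ϖ1 < ϖ12
  h4 : ϖ12 < ϖ21
  h5 : ϖ21 < ϖ2
  h6 : ϖ2 < ϖ22
  h7 : ϖ22 < F.θ2
  hc1 : F.J ϖ1 = 1/4
  hc2 : F.J ϖ2 = 1/4
  hstrong : ∀ y ∈ Set.Ioo ϖ1 ϖ2, 1/4 < F.J y
  hweak : ∀ y ∈ Set.Ioo F.θ1 ϖ1 ∪ Set.Ioo ϖ2 F.θ2, 0 < F.J y ∧ F.J y < 1/4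
  hmild : ∀ y ∈ Set.Ioo ϖ11 ϖ12 ∪ Set.Ioo ϖ21 ϖ22, |F.J y - 1/4| ≤ δ

/-- The stream function `ψ(t,y) = ∫₀² G_k(y,z) ω(t,z) dz`. -/
def psi (k : ℕ) (ω : ℝ → ℝ → ℂ) (t y : ℝ) : ℂ :=
  ∫ z in (0:ℝ)..2, (Gker k y z : ℂ) * ω t z

/-- `(ω, ρ)` is a solution of the `k`-th Fourier mode of the Boussinesq system linearized
around the stably stratified shear flow, with initial data `(ω0, P·σ0)` compactly supported
inside the stratified region `(θ1, θ2)`. -/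
def IsSolution (F : Flow) (k : ℕ) (ω0 σ0 : ℝ → ℂ) (ω ρ : ℝ → ℝ → ℂ) : Prop :=
  ContDiff ℝ 5 F.v ∧
  ContDiff ℝ 3 ω0 ∧ ContDiff ℝ 4 σ0 ∧
  tsupport ω0 ⊆ Set.Ioo F.θ1 F.θ2 ∧ tsupport σ0 ⊆ Set.Ioo F.θ1 F.θ2 ∧
  ContinuousOn (fun p : ℝ × ℝ => ω p.1 p.2) (Set.Ici (0:ℝ) ×ˢ Set.Icc (0:ℝ) 2) ∧
  ContinuousOn (fun p : ℝ × ℝ => ρ p.1 p.2) (Set.Ici (0:ℝ) ×ˢ Set.Icc (0:ℝ) 2) ∧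
  (∀ y ∈ Set.Icc (0:ℝ) 2, ω 0 y = ω0 y ∧ ρ 0 y = (F.P y : ℂ) * σ0 y) ∧
  (∀ t : ℝ, 0 < t → ∀ y ∈ Set.Icc (0:ℝ) 2,
    HasDerivAt (fun s => ω s y)
      (-(Complex.I * (k : ℂ) * (F.v y : ℂ)) * ω t y
        + Complex.I * (k : ℂ) * ((iteratedDeriv 2 F.v y : ℝ) : ℂ) * psi k ω t y
        - Complex.I * (k : ℂ) * (F.g : ℂ) * ρ t y) t ∧
    HasDerivAt (fun s => ρ s y)
      (-(Complex.I * (k : ℂ) * (F.v y : ℂ)) * ρ t y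
        + Complex.I * (k : ℂ) * (F.P y : ℂ) * psi k ω t y) t)

/-- The weighted data norm `S_{k,j} = k^j (‖ω0 − v''σ0‖_{H_k^{j+1}} + k⁻¹‖σ0'' − k²σ0‖_{H_k^j})`. -/
def Sk (F : Flow) (k j : ℕ) (ω0 σ0 : ℝ → ℂ) : ℝ :=
  (k : ℝ) ^ j *
    (HkNorm k (j + 1) (fun y => ω0 y - ((iteratedDeriv 2 F.v y : ℝ) : ℂ) * σ0 y)
      + (k : ℝ)⁻¹ * HkNorm k j (fun y => iteratedDeriv 2 σ0 y - (k : ℂ) ^ 2 * σ0 y))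

end Boussinesq

/-!
Let `a ∈ {θ1, θ2}` be the point where `v(a) = Re λ`. There `v''`, `𝒫` and `𝒫'` vanish, while
`|v(y) - λ| ≥ c0 |y - a|`, so Taylor expansion at `a` bounds the coefficients:
`|v''/(v - λ)| ≤ ‖v'''‖∞ / c0` and `|𝒫/(v - λ)²| ≤ ‖𝒫''‖∞ / (2 c0²)`. By (H1) the potential
`Q = k² + v''/(v - λ) - 𝒫/(v - λ)²` of the equation `ψ'' = Q ψ` therefore has `Re Q > 0` off `a`.
Then `Re(ψ̄ ψ')` has derivative `Re Q |ψ|² + |ψ'|² ≥ 0` off `a` and vanishes at `0` and `2`, so it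
vanishes identically, which forces `ψ = 0`.
-/

open Set

theorem abs_le_half_mul_sq_of_abs_deriv_le {f : ℝ → ℝ} {a y M : ℝ} (hf : Differentiable ℝ f)
    (hfa : f a = 0) (hM : ∀ x ∈ uIcc a y, |deriv f x| ≤ M * |x - a|) :
    |f y| ≤ M / 2 * (y - a) ^ 2 := by
  rcases eq_or_ne y a with rfl | hya
  · simp [hfa]
  set g : ℝ → ℝ := fun x => (x - a) ^ 2 / 2
  have hg : ∀ x, HasDerivAt g (x - a) x := fun x => by
    simpa using (((hasDerivAt_id x).sub_const a).pow 2).div_const 2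
  -- Cauchy's mean value theorem for `f` and `(x - a)² / 2`
  have cauchy {u w : ℝ} (huw : u < w) :=
    exists_ratio_hasDerivAt_eq_ratio_slope f (deriv f) huw hf.continuous.continuousOn
      (fun x _ => (hf x).hasDerivAt) g (· - a)
      (fun x _ => (hg x).continuousAt.continuousWithinAt) (fun x _ => hg x)
  obtain ⟨c, hc, hca, hfc⟩ :
      ∃ c ∈ uIcc a y, c ≠ a ∧ (y - a) ^ 2 / 2 * deriv f c = f y * (c - a) := by
    rcases hya.lt_or_gt with h | h
    · obtain ⟨c, hc, e⟩ := cauchy h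
      refine ⟨c, uIcc_comm a y ▸ Icc_subset_uIcc (Ioo_subset_Icc_self hc), hc.2.ne, ?_⟩
      simp only [g, hfa, sub_self] at e
      linear_combination -e
    · obtain ⟨c, hc, e⟩ := cauchy h
      refine ⟨c, Icc_subset_uIcc (Ioo_subset_Icc_self hc), hc.1.ne', ?_⟩
      simp only [g, hfa, sub_self] at e
      linear_combination e
  have hpos : 0 < |c - a| := abs_pos.2 (sub_ne_zero.2 hca)
  refine le_of_mul_le_mul_right ?_ hpos
  calc |f y| * |c - a| = (y - a) ^ 2 / 2 * |deriv f c| := by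
        rw [← abs_mul, ← hfc, abs_mul, abs_of_nonneg (by positivity)]
    _ ≤ (y - a) ^ 2 / 2 * (M * |c - a|) := by gcongr; exact hM c hc
    _ = M / 2 * (y - a) ^ 2 * |c - a| := by ring

theorem deriv_eq_zero_of_forall_mem_Icc_eq_zero {f : ℝ → ℝ} {c d x : ℝ} (hcd : c < d)
    (hx : x ∈ Icc c d) (hf : DifferentiableAt ℝ f x) (h0 : ∀ y ∈ Icc c d, f y = 0) :
    deriv f x = 0 := by
  have hu : UniqueDiffWithinAt ℝ (Icc c d) x := uniqueDiffOn_Icc hcd x hx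
  rw [← hf.hasDerivAt.hasDerivWithinAt.derivWithin hu,
    ((hasDerivWithinAt_const x _ (0 : ℝ)).congr h0 (h0 x hx)).derivWithin hu]

theorem Convex.mul_abs_sub_le_abs_image_sub_of_le_deriv {D : Set ℝ} (hD : Convex ℝ D)
    {f : ℝ → ℝ} (hf : ContinuousOn f D) (hf' : DifferentiableOn ℝ f (interior D)) {C : ℝ}
    (hf'_ge : ∀ x ∈ interior D, C ≤ deriv f x) {x y : ℝ} (hx : x ∈ D) (hy : y ∈ D) :
    C * |y - x| ≤ |f y - f x| := by
  wlog hxy : x ≤ y generalizing x y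
  · rw [abs_sub_comm, abs_sub_comm (f y)]
    exact this hy hx (le_of_not_ge hxy)
  rw [abs_of_nonneg (sub_nonneg.2 hxy)]
  exact (hD.mul_sub_le_image_sub_of_le_deriv hf hf' hf'_ge x hx y hy hxy).trans (le_abs_self _)

theorem monotoneOn_Icc_of_hasDerivAt_nonneg_of_ne {h h' : ℝ → ℝ} {s t a : ℝ}
    (ha : a ∈ Icc s t) (hc : ContinuousOn h (Icc s t))
    (hd : ∀ y ∈ Ioo s t, y ≠ a → HasDerivAt h (h' y) y)
    (hnn : ∀ y ∈ Ioo s t, y ≠ a → 0 ≤ h' y) : MonotoneOn h (Icc s t) := by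
  have piece {u w : ℝ} (hsu : s ≤ u) (hwt : w ≤ t) (hne : ∀ y ∈ Ioo u w, y ≠ a) :
      MonotoneOn h (Icc u w) := by
    refine monotoneOn_of_hasDerivWithinAt_nonneg (f' := h') (convex_Icc u w)
      (hc.mono (Icc_subset_Icc hsu hwt)) (fun y hy => ?_) (fun y hy => ?_) <;>
      rw [interior_Icc] at hy
    · exact (hd y (Ioo_subset_Ioo hsu hwt hy) (hne y hy)).hasDerivWithinAt
    · exact hnn y (Ioo_subset_Ioo hsu hwt hy) (hne y hy)
  rw [← Icc_union_Icc_eq_Icc ha.1 ha.2]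
  exact (piece le_rfl ha.2 fun y hy => hy.2.ne).union_right
    (piece ha.1 le_rfl fun y hy => hy.1.ne') (isGreatest_Icc ha.1) (isLeast_Icc ha.2)

theorem hasDerivAt_inner_deriv {ψ : ℝ → ℂ} {q : ℂ} {y : ℝ} (hψ : DifferentiableAt ℝ ψ y)
    (hψ'' : HasDerivAt (deriv ψ) (q * ψ y) y) :
    HasDerivAt (fun x => inner ℝ (ψ x) (deriv ψ x))
      (q.re * ‖ψ y‖ ^ 2 + ‖deriv ψ y‖ ^ 2) y := by
  refine (hψ.hasDerivAt.inner ℝ hψ'').congr_deriv ?_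
  rw [real_inner_self_eq_norm_sq, Complex.inner, mul_assoc, Complex.mul_conj,
    Complex.re_mul_ofReal, Complex.normSq_eq_norm_sq]

theorem eqOn_zero_of_hasDerivAt_deriv_eq_mul {ψ Q : ℝ → ℂ} {s t a : ℝ} (hψ : ContDiff ℝ 1 ψ)
    (hs : ψ s = 0) (ht : ψ t = 0) (ha : a ∈ Ioo s t)
    (hQ : ∀ y ∈ Ioo s t, y ≠ a → 0 < (Q y).re)
    (hψ'' : ∀ y ∈ Ioo s t, y ≠ a → HasDerivAt (deriv ψ) (Q y * ψ y) y) :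
    EqOn ψ 0 (Icc s t) := by
  set E : ℝ → ℝ := fun x => inner ℝ (ψ x) (deriv ψ x)
  have hE' (y) (hy : y ∈ Ioo s t) (hya : y ≠ a) :=
    hasDerivAt_inner_deriv (hψ.differentiable one_ne_zero y) (hψ'' y hy hya)
  have hmono : MonotoneOn E (Icc s t) :=
    monotoneOn_Icc_of_hasDerivAt_nonneg_of_ne (Ioo_subset_Icc_self ha)
      (hψ.continuous.inner (hψ.continuous_deriv le_rfl)).continuousOn hE'
      fun y hy hya => by have := (hQ y hy hya).le; positivity
  have hst : s ≤ t := (ha.1.trans ha.2).le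
  have hE0 : ∀ y ∈ Icc s t, E y = 0 := fun y hy =>
    le_antisymm (by simpa [E, ht] using hmono hy (right_mem_Icc.2 hst) hy.2)
      (by simpa [E, hs] using hmono (left_mem_Icc.2 hst) hy hy.1)
  have hoff : ∀ y ∈ Ioo s t, y ≠ a → ψ y = 0 := by
    intro y hy hya
    have hE'0 : HasDerivAt E 0 y := (hasDerivAt_const y (0 : ℝ)).congr_of_eventuallyEq <|
      eventually_of_mem (Icc_mem_nhds hy.1 hy.2) hE0
    have := (hE' y hy hya).unique hE'0
    have hQy := hQ y hy hya
    have : ‖ψ y‖ ^ 2 ≤ 0 := by nlinarith [sq_nonneg ‖deriv ψ y‖, sq_nonneg ‖ψ y‖]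
    simpa using this
  have hdense : Icc s t ⊆ closure (Ioo s a ∪ Ioo a t) := by
    rw [closure_union, closure_Ioo ha.1.ne, closure_Ioo ha.2.ne,
      Icc_union_Icc_eq_Icc ha.1.le ha.2.le]
  refine fun y hy =>
    (isClosed_eq hψ.continuous continuous_const).closure_subset_iff.2 ?_ (hdense hy)
  rintro x (hx | hx)
  · exact hoff x ⟨hx.1, hx.2.trans ha.2⟩ hx.2.ne
  · exact hoff x ⟨ha.1.trans hx.1, hx.2⟩ hx.1.ne'

namespace Boussinesq

theorem abs_le_supAbs {f : ℝ → ℝ} (hf : ContinuousOn f (Icc 0 2)) {y : ℝ} (hy : y ∈ Icc 0 2) :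
    |f y| ≤ supAbs f :=
  le_csSup (isCompact_Icc.image_of_continuousOn hf.abs).bddAbove ⟨y, hy, rfl⟩

theorem abs_le_supAbs_deriv_mul_abs_sub {f : ℝ → ℝ} (hf : Differentiable ℝ f)
    (hf' : Continuous (deriv f)) {a y : ℝ} (ha : a ∈ Icc 0 2) (hy : y ∈ Icc 0 2) (hfa : f a = 0) :
    |f y| ≤ supAbs (deriv f) * |y - a| := by
  simpa [hfa] using (convex_Icc (0 : ℝ) 2).norm_image_sub_le_of_norm_deriv_le
    (fun x _ => hf x) (fun x hx => abs_le_supAbs hf'.continuousOn hx) ha hy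

namespace Flow

variable {F : Flow}

theorem HP.contDiff_calP (hHP : F.HP) : ContDiff ℝ 2 F.calP :=
  contDiff_const.mul hHP.2.1

theorem HP.calP_eq_zero_and_deriv_eq_zero (hHP : F.HP) {c d a : ℝ} (hcd : c < d)
    (ha : a ∈ Icc c d) (hsub : Icc c d ⊆ Icc 0 F.θ1 ∪ Icc F.θ2 2) :
    F.calP a = 0 ∧ deriv F.calP a = 0 := by
  have h0 : ∀ y ∈ Icc c d, F.calP y = 0 := fun y hy => by
    simp [calP, hHP.2.2.2.2.2.1 y (hsub hy)]
  exact ⟨h0 a ha, deriv_eq_zero_of_forall_mem_Icc_eq_zero hcd ha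
    (hHP.contDiff_calP.differentiable (by norm_num) a) h0⟩

theorem exists_degenerate_point (hHP : F.HP) (hHv : F.Hv) {lam : ℂ}
    (hlam : lam.re = F.v F.θ1 ∨ lam.re = F.v F.θ2) :
    ∃ a ∈ Ioo (0 : ℝ) 2, lam.re = F.v a ∧ iteratedDeriv 2 F.v a = 0 ∧
      F.calP a = 0 ∧ deriv F.calP a = 0 := by
  have ⟨_, _, hθ1, hθ12, hθ2, _⟩ := hHP
  have hv'' {a : ℝ} (ha : a ∉ Ioo F.θ1 F.θ2) : iteratedDeriv 2 F.v a = 0 :=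
    image_eq_zero_of_notMem_tsupport fun h => ha (hHv.2.2.2.2 h)
  rcases hlam with h | h
  · exact ⟨F.θ1, ⟨hθ1, hθ12.trans hθ2⟩, h, hv'' fun h => h.1.false,
      hHP.calP_eq_zero_and_deriv_eq_zero hθ1 (right_mem_Icc.2 hθ1.le) subset_union_left⟩
  · exact ⟨F.θ2, ⟨hθ1.trans hθ12, hθ2⟩, h, hv'' fun h => h.2.false,
      hHP.calP_eq_zero_and_deriv_eq_zero hθ2 (left_mem_Icc.2 hθ2.le) subset_union_right⟩

theorem Hv.mul_abs_sub_le_norm_sub (hHv : F.Hv) {a y : ℝ} {lam : ℂ} (ha : a ∈ Icc 0 2)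
    (hy : y ∈ Icc 0 2) (hre : lam.re = F.v a) : F.c0 * |y - a| ≤ ‖(F.v y : ℂ) - lam‖ := by
  have hv : Differentiable ℝ F.v := hHv.1.differentiable (by norm_num)
  calc F.c0 * |y - a| ≤ |F.v y - F.v a| :=
        (convex_Icc 0 2).mul_abs_sub_le_abs_image_sub_of_le_deriv hv.continuous.continuousOn
          hv.differentiableOn (fun x hx => (hHv.2.2.2.1 x (interior_subset hx)).1) ha hy
    _ = |((F.v y : ℂ) - lam).re| := by simp [hre]
    _ ≤ ‖(F.v y : ℂ) - lam‖ := Complex.abs_re_le_norm _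

theorem Hv.norm_iteratedDeriv_two_div_le (hHv : F.Hv) {a y : ℝ} {lam : ℂ} (ha : a ∈ Icc 0 2)
    (hy : y ∈ Icc 0 2) (hya : y ≠ a) (hre : lam.re = F.v a) (hv2a : iteratedDeriv 2 F.v a = 0) :
    ‖((iteratedDeriv 2 F.v y : ℝ) : ℂ) / ((F.v y : ℂ) - lam)‖
      ≤ F.c0⁻¹ * supAbs (iteratedDeriv 3 F.v) := by
  have hd : 0 < F.c0 * |y - a| := mul_pos hHv.2.1 (abs_pos.2 (sub_ne_zero.2 hya))
  have hnum : |iteratedDeriv 2 F.v y| ≤ supAbs (iteratedDeriv 3 F.v) * |y - a| := by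
    have h3 : iteratedDeriv 3 F.v = deriv (iteratedDeriv 2 F.v) := iteratedDeriv_succ
    rw [h3]
    exact abs_le_supAbs_deriv_mul_abs_sub (hHv.1.differentiable_iteratedDeriv 2 (by norm_num))
      (h3 ▸ hHv.1.continuous_iteratedDeriv 3 (by norm_num)) ha hy hv2a
  rw [norm_div, Complex.norm_real, Real.norm_eq_abs]
  calc |iteratedDeriv 2 F.v y| / ‖(F.v y : ℂ) - lam‖
      ≤ supAbs (iteratedDeriv 3 F.v) * |y - a| / (F.c0 * |y - a|) :=
        div_le_div₀ ((abs_nonneg _).trans hnum) hnum hd (hHv.mul_abs_sub_le_norm_sub ha hy hre)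
    _ = F.c0⁻¹ * supAbs (iteratedDeriv 3 F.v) := by field_simp

theorem norm_calP_div_sq_le (hHP : F.HP) (hHv : F.Hv) {a y : ℝ} {lam : ℂ} (ha : a ∈ Icc 0 2)
    (hy : y ∈ Icc 0 2) (hya : y ≠ a) (hre : lam.re = F.v a) (hPa : F.calP a = 0)
    (hPa' : deriv F.calP a = 0) :
    ‖(F.calP y : ℂ) / ((F.v y : ℂ) - lam) ^ 2‖
      ≤ 1 / 2 * F.c0⁻¹ ^ 2 * supAbs (iteratedDeriv 2 F.calP) := by
  have hP := hHP.contDiff_calP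
  have hd : 0 < F.c0 * |y - a| := mul_pos hHv.2.1 (abs_pos.2 (sub_ne_zero.2 hya))
  have hP' : ∀ x ∈ uIcc a y, |deriv F.calP x| ≤ supAbs (iteratedDeriv 2 F.calP) * |x - a| := by
    intro x hx
    rw [iteratedDeriv_succ, iteratedDeriv_one]
    refine abs_le_supAbs_deriv_mul_abs_sub ?_ ?_ ha (uIcc_subset_Icc ha hy hx) hPa'
    · simpa using hP.differentiable_iteratedDeriv 1 (by norm_num)
    · simpa [iteratedDeriv_succ] using hP.continuous_iteratedDeriv 2 le_rfl
  have hnum := abs_le_half_mul_sq_of_abs_deriv_le (hP.differentiable (by norm_num)) hPa hP'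
  rw [norm_div, Complex.norm_real, Real.norm_eq_abs, norm_pow]
  calc |F.calP y| / ‖(F.v y : ℂ) - lam‖ ^ 2
      ≤ supAbs (iteratedDeriv 2 F.calP) / 2 * (y - a) ^ 2 / (F.c0 * |y - a|) ^ 2 :=
        div_le_div₀ ((abs_nonneg _).trans hnum) hnum (by positivity)
          (pow_le_pow_left₀ hd.le (hHv.mul_abs_sub_le_norm_sub ha hy hre) 2)
    _ = 1 / 2 * F.c0⁻¹ ^ 2 * supAbs (iteratedDeriv 2 F.calP) := by
        rw [mul_pow, sq_abs]
        field_simp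

/-- The Taylor–Goldstein equation reads `ψ'' = F.tgPotential k λ · ψ`. -/
def tgPotential (F : Flow) (k : ℕ) (lam : ℂ) (y : ℝ) : ℂ :=
  (k : ℂ) ^ 2 + ((iteratedDeriv 2 F.v y : ℝ) : ℂ) / ((F.v y : ℂ) - lam)
    - (F.calP y : ℂ) / ((F.v y : ℂ) - lam) ^ 2

theorem re_tgPotential_pos (hHP : F.HP) (hHv : F.Hv) (hH1 : F.H1) {k : ℕ} (hk : 1 ≤ k)
    {a y : ℝ} {lam : ℂ} (ha : a ∈ Icc 0 2) (hy : y ∈ Icc 0 2) (hya : y ≠ a)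
    (hre : lam.re = F.v a) (hv2a : iteratedDeriv 2 F.v a = 0) (hPa : F.calP a = 0)
    (hPa' : deriv F.calP a = 0) : 0 < (F.tgPotential k lam y).re := by
  have hshear := hHv.norm_iteratedDeriv_two_div_le ha hy hya hre hv2a
  have hstrat := norm_calP_div_sq_le hHP hHv ha hy hya hre hPa hPa'
  have hk2 : (1 : ℝ) ≤ (k : ℝ) ^ 2 := one_le_pow₀ (by exact_mod_cast hk)
  have hre_k : ((k : ℂ) ^ 2).re = (k : ℝ) ^ 2 := by norm_cast
  unfold H1 at hH1
  rw [tgPotential, Complex.sub_re, Complex.add_re, hre_k]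
  linarith [hH1, neg_abs_le (((iteratedDeriv 2 F.v y : ℝ) : ℂ) / ((F.v y : ℂ) - lam)).re,
    Complex.abs_re_le_norm (((iteratedDeriv 2 F.v y : ℝ) : ℂ) / ((F.v y : ℂ) - lam)),
    Complex.re_le_norm ((F.calP y : ℂ) / ((F.v y : ℂ) - lam) ^ 2)]

end Flow

theorem no_eigenvalue_at_boundary_of_stratification_general
    (F : Flow) (hHP : F.HP) (hHv : F.Hv) (hH1 : F.H1)
    (k : ℕ) (hk : 1 ≤ k) (lam : ℂ)
    (hlam : lam.re = F.v F.θ1 ∨ lam.re = F.v F.θ2)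
    (ψ : ℝ → ℂ) (hψ : ContDiff ℝ 1 ψ)
    (hψ0 : ψ 0 = 0) (hψ2 : ψ 2 = 0)
    (heq : ∀ y ∈ Set.Ioo (0:ℝ) 2, (F.v y : ℂ) ≠ lam →
      ∃ d : ℂ, HasDerivAt (deriv ψ) d y ∧
        d - (k : ℂ) ^ 2 * ψ y
          - (((iteratedDeriv 2 F.v y : ℝ) : ℂ) / ((F.v y : ℂ) - lam)) * ψ y
          + ((F.calP y : ℂ) / ((F.v y : ℂ) - lam) ^ 2) * ψ y = 0) :
    ∀ y ∈ Set.Icc (0:ℝ) 2, ψ y = 0 := by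
  obtain ⟨a, ha, hre, hv2a, hPa, hPa'⟩ := F.exists_degenerate_point hHP hHv hlam
  have hIcc : Ioo (0 : ℝ) 2 ⊆ Icc 0 2 := Ioo_subset_Icc_self
  have hv_ne (y) (hy : y ∈ Ioo (0 : ℝ) 2) (hya : y ≠ a) : (F.v y : ℂ) ≠ lam := by
    rw [← sub_ne_zero, ← norm_pos_iff]
    exact (mul_pos hHv.2.1 (abs_pos.2 (sub_ne_zero.2 hya))).trans_le
      (hHv.mul_abs_sub_le_norm_sub (hIcc ha) (hIcc hy) hre)
  have hψ'' : ∀ y ∈ Ioo (0 : ℝ) 2, y ≠ a →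
      HasDerivAt (deriv ψ) (F.tgPotential k lam y * ψ y) y := by
    intro y hy hya
    obtain ⟨d, hd, hTG⟩ := heq y hy (hv_ne y hy hya)
    refine hd.congr_deriv ?_
    rw [Flow.tgPotential]
    linear_combination hTG
  exact fun y hy => eqOn_zero_of_hasDerivAt_deriv_eq_mul hψ hψ0 hψ2 ha
    (fun x hx hxa => Flow.re_tgPotential_pos hHP hHv hH1 hk (hIcc ha) (hIcc hx) hxa hre hv2a
      hPa hPa') hψ'' hy

/-- No `λ` whose real part equals `v(θ1)` or `v(θ2)` is an eigenvalue of the mode-`k`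
linearized Boussinesq operator: any solution of the Taylor–Goldstein equation with
Dirichlet boundary conditions vanishes identically. -/
theorem no_eigenvalue_at_boundary_of_stratification
    (F : Flow) (hHP : F.HP) (hHv : F.Hv) (hH1 : F.H1)
    (k : ℕ) (hk : 1 ≤ k) (lam : ℂ)
    (hlam : lam.re = F.v F.θ1 ∨ lam.re = F.v F.θ2)
    (ψ : ℝ → ℂ) (hψ : ContDiff ℝ 1 ψ)
    (hψ0 : ψ 0 = 0) (hψ2 : ψ 2 = 0)
    (hLip : ∃ L : NNReal, LipschitzOnWith L (deriv ψ) (Set.Icc (0:ℝ) 2))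
    (heq : ∀ y ∈ Set.Ioo (0:ℝ) 2, (F.v y : ℂ) ≠ lam →
      ∃ d : ℂ, HasDerivAt (deriv ψ) d y ∧
        d - (k : ℂ) ^ 2 * ψ y
          - (((iteratedDeriv 2 F.v y : ℝ) : ℂ) / ((F.v y : ℂ) - lam)) * ψ y
          + ((F.calP y : ℂ) / ((F.v y : ℂ) - lam) ^ 2) * ψ y = 0) :
    ∀ y ∈ Set.Icc (0:ℝ) 2, ψ y = 0 :=
  no_eigenvalue_at_boundary_of_stratification_general F hHP hHv hH1 k hk lam hlam ψ hψ hψ0 hψ2 heq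

end Boussinesq
end
end

section
/- For every t≥0 and every y∈[0,θ1]∪[θ2,2] (the non-stratified region), one has ω(t,y)=0 and ρ(t,y)=0. That is, the vorticity and density perturbations of the mode-k linearized Boussinesq evolution remain supported in the stratified region (θ1,θ2) for all times. -/
open MeasureTheory Filter

noncomputable section

/-!
Outside the stratified region `P = 0` and `v'' = 0`, so at a fixed height `y` there both
`ρ(·,y)` and (once `ρ(·,y) = 0` is known) `ω(·,y)` solve the scalar equation
`f' = -ik v(y) f` with zero initial value; uniqueness for this linear ODE makes them vanish.
-/

open Set

theorem eq_zero_of_hasDerivAt_eq_smul_self {E : Type*} [NormedAddCommGroup E] [NormedSpace ℂ E]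
    {f : ℝ → E} {c : ℂ} {a : ℝ} (hf : ContinuousOn f (Ici a))
    (hf' : ∀ t, a < t → HasDerivAt f (c • f t) t) (ha : f a = 0) :
    ∀ t, a ≤ t → f t = 0 := by
  have hfa : ContinuousWithinAt f (Ioi a) a := (hf a self_mem_Ici).mono Ioi_subset_Ici_self
  -- The derivative `c • f` extends continuously to `a`, hence is also the right derivative there.
  have hderiv_a : HasDerivWithinAt f (c • f a) (Ici a) a := by
    refine hasDerivWithinAt_Ici_of_tendsto_deriv
      (fun t ht => (hf' t ht).differentiableAt.differentiableWithinAt) hfa self_mem_nhdsWithin ?_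
    refine (hfa.const_smul c).tendsto.congr' ?_
    filter_upwards [self_mem_nhdsWithin] with t ht
    exact (hf' t ht).deriv.symm
  intro t ht
  refine eq_zero_of_abs_deriv_le_mul_abs_self_of_eq_zero_right (K := ‖c‖)
    (hf.mono Icc_subset_Ici_self) (fun s hs => ?_) ha (fun s _ => (norm_smul c (f s)).le)
    t ⟨ht, le_rfl⟩
  rcases hs.1.eq_or_lt with rfl | has
  · exact hderiv_a
  · exact (hf' s has).hasDerivWithinAt

namespace Boussinesq

namespace IsSolution

variable {F : Flow} {k : ℕ} {ω0 σ0 : ℝ → ℂ} {ω ρ : ℝ → ℝ → ℂ} {y : ℝ}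

theorem rho_eq_zero_of_P_eq_zero (hsol : IsSolution F k ω0 σ0 ω ρ) (hy : y ∈ Icc (0:ℝ) 2)
    (hP : F.P y = 0) : ∀ t, 0 ≤ t → ρ t y = 0 := by
  obtain ⟨-, -, -, -, -, -, hρ, hinit, hode⟩ := hsol
  refine eq_zero_of_hasDerivAt_eq_smul_self (c := -(Complex.I * k * F.v y))
    (hρ.uncurry_right (f := ρ) y hy) (fun t ht => ?_) ?_
  · simpa [hP] using (hode t ht y hy).2
  · simp [(hinit y hy).2, hP]

theorem omega_eq_zero_of_P_eq_zero (hsol : IsSolution F k ω0 σ0 ω ρ) (hy : y ∈ Icc (0:ℝ) 2)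
    (hP : F.P y = 0) (hv : iteratedDeriv 2 F.v y = 0) (hω0 : ω0 y = 0) :
    ∀ t, 0 ≤ t → ω t y = 0 := by
  have hρ := hsol.rho_eq_zero_of_P_eq_zero hy hP
  obtain ⟨-, -, -, -, -, hω, -, hinit, hode⟩ := hsol
  refine eq_zero_of_hasDerivAt_eq_smul_self (c := -(Complex.I * k * F.v y))
    (hω.uncurry_right (f := ω) y hy) (fun t ht => ?_) ?_
  · simpa [hv, hρ t ht.le] using (hode t ht y hy).1
  · rw [(hinit y hy).1, hω0]

end IsSolution

theorem support_preserved_general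
    (F : Flow) (hHP : F.HP) (hHv : F.Hv)
    (k : ℕ) (ω0 σ0 : ℝ → ℂ) (ω ρ : ℝ → ℝ → ℂ)
    (hsol : IsSolution F k ω0 σ0 ω ρ) :
    ∀ t : ℝ, 0 ≤ t →
      ∀ y ∈ Set.Icc (0:ℝ) F.θ1 ∪ Set.Icc F.θ2 (2:ℝ),
        ω t y = 0 ∧ ρ t y = 0 := by
  obtain ⟨-, -, hθ1, hθ12, hθ2, hP, -⟩ := hHP
  obtain ⟨-, -, -, -, hv⟩ := hHv
  have hω0supp : tsupport ω0 ⊆ Ioo F.θ1 F.θ2 := hsol.2.2.2.1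
  intro t ht y hy
  have hy2 : y ∈ Icc (0:ℝ) 2 := by
    rcases hy with h | h <;> constructor <;> linarith [h.1, h.2]
  have hyout : y ∉ Ioo F.θ1 F.θ2 := by
    rintro ⟨h1, h2⟩
    rcases hy with h | h <;> linarith [h.1, h.2]
  have hv2 : iteratedDeriv 2 F.v y = 0 := image_eq_zero_of_notMem_tsupport fun h => hyout (hv h)
  have hω0 : ω0 y = 0 := image_eq_zero_of_notMem_tsupport fun h => hyout (hω0supp h)
  exact ⟨hsol.omega_eq_zero_of_P_eq_zero hy2 (hP y hy) hv2 hω0 t ht,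
    hsol.rho_eq_zero_of_P_eq_zero hy2 (hP y hy) t ht⟩

/-- The vorticity and density perturbations remain supported in the stratified region:
`ω(t,y) = 0` and `ρ(t,y) = 0` for all `t ≥ 0` and `y ∈ [0,θ1] ∪ [θ2,2]`. -/
theorem support_preserved
    (F : Flow) (hHP : F.HP) (hHv : F.Hv)
    (k : ℕ) (hk : 1 ≤ k) (ω0 σ0 : ℝ → ℂ) (ω ρ : ℝ → ℝ → ℂ)
    (hsol : IsSolution F k ω0 σ0 ω ρ) :
    ∀ t : ℝ, 0 ≤ t →
      ∀ y ∈ Set.Icc (0:ℝ) F.θ1 ∪ Set.Icc F.θ2 (2:ℝ),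
        ω t y = 0 ∧ ρ t y = 0 :=
  support_preserved_general F hHP hHv k ω0 σ0 ω ρ hsol

end Boussinesq
end
end
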